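/- For every convex body K ⊆ ℝ^d (d ≥ 2), the function f_K is convex and is 1-Lipschitz with respect to the ℓ¹-norm: |f_K(y) − f_K(y′)| ≤ Σ_{j=1}^{d−1} |y_j − y′_j| for all y, y′ ∈ ℝ^{d−1}. -/

import Mathlib

open MeasureTheory Metric Set
open scoped RealInnerProductSpace ENNReal

noncomputable section

/-- Vertical projection `ℝ^d = ℝ^{d-1} × ℝ → ℝ^{d-1}` (forget the last coordinate). -/
def vproj (n : ℕ) (x : EuclideanSpace ℝ (Fin (n + 1))) : EuclideanSpace ℝ (Fin n) :=
  WithLp.toLp 2 (fun j => x j.castSucc)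

/-- Lift `y ∈ ℝ^{d-1}` and `t ∈ ℝ` to the point `(y, t) ∈ ℝ^d`. -/
def vlift (n : ℕ) (y : EuclideanSpace ℝ (Fin n)) (t : ℝ) : EuclideanSpace ℝ (Fin (n + 1)) :=
  WithLp.toLp 2 (fun i => if h : (i : ℕ) < n then y ⟨i, h⟩ else t)

/-- The last standard basis vector `e_d` of `ℝ^d`. -/
def ed (n : ℕ) : EuclideanSpace ℝ (Fin (n + 1)) := EuclideanSpace.single (Fin.last n) 1

/-- Support function of a set. -/
def suppFn {d : ℕ} (K : Set (EuclideanSpace ℝ (Fin d)))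
    (u : EuclideanSpace ℝ (Fin d)) : ℝ :=
  sSup ((fun x => ⟪u, x⟫) '' K)

/-- Unit vectors `u` with `-u_d ≥ |u_j|` for all `j ≤ d-1` (downward-dominated directions). -/
def downDirs (n : ℕ) : Set (EuclideanSpace ℝ (Fin (n + 1))) :=
  {u | ‖u‖ = 1 ∧ ∀ j : Fin n, |u j.castSucc| ≤ -u (Fin.last n)}

/-- The (downward) support set `S(K)`: intersection of the supporting halfspaces of `K`
with downward-dominated normals. -/
def SK {n : ℕ} (K : Set (EuclideanSpace ℝ (Fin (n + 1)))) :
    Set (EuclideanSpace ℝ (Fin (n + 1))) :=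
  ⋂ u ∈ downDirs n, {x | ⟪u, x⟫ ≤ suppFn K u}

/-- The convex function whose graph is the lower boundary of `S(K)`. -/
def fK {n : ℕ} (K : Set (EuclideanSpace ℝ (Fin (n + 1)))) (y : EuclideanSpace ℝ (Fin n)) : ℝ :=
  sInf {t : ℝ | vlift n y t ∈ SK K}

/-- `K↓ ⊕ α`: points of `ℝ^{d-1}` within distance `α` of the vertical projection of `K`. -/
def Koplus {n : ℕ} (K : Set (EuclideanSpace ℝ (Fin (n + 1)))) (α : ℝ) :
    Set (EuclideanSpace ℝ (Fin n)) :=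
  {y | Metric.infDist y (vproj n '' K) ≤ α}

/-- The `α`-restricted support set `K^{(α)}`. -/
def Krestr {n : ℕ} (K : Set (EuclideanSpace ℝ (Fin (n + 1)))) (α : ℝ) :
    Set (EuclideanSpace ℝ (Fin (n + 1))) :=
  SK K ∩ {x | vproj n x ∈ Koplus K α}

/-- The lower boundary `∂̄K^{(α)}` of the restricted support set. -/
def lowerBdry {n : ℕ} (K : Set (EuclideanSpace ℝ (Fin (n + 1)))) (α : ℝ) :
    Set (EuclideanSpace ℝ (Fin (n + 1))) :=
  (fun y => vlift n y (fK K y)) '' Koplus K α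

/-- The base of the `ε`-dual cap of `K^{(2ε)}` induced by the point `q` and
outward normal `u`. -/
def DBase {n : ℕ} (K : Set (EuclideanSpace ℝ (Fin (n + 1)))) (ε : ℝ)
    (q u : EuclideanSpace ℝ (Fin (n + 1))) : Set (EuclideanSpace ℝ (Fin (n + 1))) :=
  {x | ⟪u, x - q⟫ = 0} ∩ closure (convexHull ℝ (Krestr K (2 * ε) ∪ {q - ε • ed n}))

/-- The projective dual of a U-shaped closed convex set. -/
def Udual {n : ℕ} (U : Set (EuclideanSpace ℝ (Fin (n + 1)))) :
    Set (EuclideanSpace ℝ (Fin (n + 1))) :=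
  {y | ∀ z ∈ U, ⟪vproj n y, vproj n z⟫ - z (Fin.last n) ≤ y (Fin.last n)}

/-!
For `u ∈ downDirs n` with `n ≥ 1` one has `u_d ≤ 0` and `|∑ j, u_j w_j| ≤ -u_d ‖w‖₁`, so every
defining half-space of `S(K)`, hence `S(K)` itself, contains `(y, s)` as soon as it contains
`(y', t)` and `t + ‖y - y'‖₁ ≤ s`. The infimum defining `f_K` is attained, since each vertical
fibre of `S(K)` is closed, bounded below by the half-space with normal `-e_d`, and nonempty because
`K ⊆ S(K)`. Applying the first fact at the point `(y', f_K y')` gives the ℓ¹-Lipschitz bound, and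
convexity of `S(K)` as an intersection of half-spaces gives convexity of `f_K`.
-/

section SupportSet

variable {n : ℕ}

lemma vlift_castSucc (y : EuclideanSpace ℝ (Fin n)) (t : ℝ) (j : Fin n) :
    vlift n y t j.castSucc = y j := by simp [vlift]

lemma vlift_last (y : EuclideanSpace ℝ (Fin n)) (t : ℝ) :
    vlift n y t (Fin.last n) = t := by simp [vlift]

lemma inner_vlift (u : EuclideanSpace ℝ (Fin (n + 1))) (y : EuclideanSpace ℝ (Fin n)) (t : ℝ) :
    ⟪u, vlift n y t⟫ = ∑ j, u j.castSucc * y j + u (Fin.last n) * t := by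
  simp [PiLp.inner_apply, Fin.sum_univ_castSucc, vlift_castSucc, vlift_last, mul_comm]

lemma vlift_vproj (x : EuclideanSpace ℝ (Fin (n + 1))) :
    vlift n (vproj n x) (x (Fin.last n)) = x := by
  ext i
  induction i using Fin.lastCases with
  | last => exact vlift_last _ _
  | cast j => exact vlift_castSucc _ _ j

lemma vlift_add_smul (a b : ℝ) (y y' : EuclideanSpace ℝ (Fin n)) (t t' : ℝ) :
    a • vlift n y t + b • vlift n y' t' = vlift n (a • y + b • y') (a * t + b * t') := by
  ext i
  by_cases h : (i : ℕ) < n <;> simp [vlift, h]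

lemma continuous_vlift (y : EuclideanSpace ℝ (Fin n)) : Continuous (vlift n y) :=
  (PiLp.continuous_toLp 2 _).comp <| continuous_pi fun i => by
    by_cases h : (i : ℕ) < n
    · simp only [h, dite_true]; exact continuous_const
    · simp only [h, dite_false]; exact continuous_id

lemma neg_ed_mem_downDirs : -ed n ∈ downDirs n := by
  refine ⟨by simp [ed], fun j => ?_⟩
  simp [ed, (Fin.castSucc_lt_last j).ne]

lemma last_nonpos_of_mem_downDirs [NeZero n] {u : EuclideanSpace ℝ (Fin (n + 1))}
    (hu : u ∈ downDirs n) : u (Fin.last n) ≤ 0 :=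
  neg_nonneg.mp <| (abs_nonneg _).trans (hu.2 0)

lemma inner_vlift_le_of_mem_downDirs [NeZero n] {u : EuclideanSpace ℝ (Fin (n + 1))}
    (hu : u ∈ downDirs n) {y y' : EuclideanSpace ℝ (Fin n)} {t s : ℝ}
    (hs : t + ∑ j, |y j - y' j| ≤ s) :
    ⟪u, vlift n y s⟫ ≤ ⟪u, vlift n y' t⟫ := by
  have hud := last_nonpos_of_mem_downDirs hu
  have hsum : ∑ j, u j.castSucc * (y j - y' j) ≤ -u (Fin.last n) * ∑ j, |y j - y' j| :=
    calc ∑ j, u j.castSucc * (y j - y' j) ≤ ∑ j, |u j.castSucc| * |y j - y' j| :=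
          Finset.sum_le_sum fun j _ => (le_abs_self _).trans (abs_mul _ _).le
      _ ≤ ∑ j, -u (Fin.last n) * |y j - y' j| :=
          Finset.sum_le_sum fun j _ => mul_le_mul_of_nonneg_right (hu.2 j) (abs_nonneg _)
      _ = _ := (Finset.mul_sum _ _ _).symm
  simp only [inner_vlift, mul_sub, Finset.sum_sub_distrib] at hsum ⊢
  nlinarith

variable {K : Set (EuclideanSpace ℝ (Fin (n + 1)))}

lemma isClosed_SK : IsClosed (SK K) :=
  isClosed_biInter fun _ _ => isClosed_le (continuous_const.inner continuous_id) continuous_const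

lemma convex_SK : Convex ℝ (SK K) :=
  convex_iInter₂ fun _ _ => convex_halfSpace_le
    ⟨fun _ _ => inner_add_right _ _ _, fun _ _ => real_inner_smul_right _ _ _⟩ _

lemma subset_SK (hK : Bornology.IsBounded K) : K ⊆ SK K := by
  intro x hx
  simp only [SK, mem_iInter₂]
  exact fun u _ => le_csSup ((innerSL ℝ u).lipschitz.isBounded_image hK).bddAbove ⟨x, hx, rfl⟩

lemma vlift_mem_SK_of_le [NeZero n] {y y' : EuclideanSpace ℝ (Fin n)} {t s : ℝ}
    (h : vlift n y' t ∈ SK K) (hs : t + ∑ j, |y j - y' j| ≤ s) : vlift n y s ∈ SK K := by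
  simp only [SK, mem_iInter₂] at h ⊢
  exact fun u hu => (inner_vlift_le_of_mem_downDirs hu hs).trans (h u hu)

variable (K) in
def SKFiber (y : EuclideanSpace ℝ (Fin n)) : Set ℝ := {t | vlift n y t ∈ SK K}

lemma isClosed_SKFiber (y : EuclideanSpace ℝ (Fin n)) : IsClosed (SKFiber K y) :=
  isClosed_SK.preimage (continuous_vlift y)

lemma bddBelow_SKFiber (y : EuclideanSpace ℝ (Fin n)) : BddBelow (SKFiber K y) := by
  refine ⟨-suppFn K (-ed n), fun t ht => ?_⟩
  have h : ⟪-ed n, vlift n y t⟫ ≤ suppFn K (-ed n) := mem_iInter₂.mp ht _ neg_ed_mem_downDirs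
  have hinner : ⟪-ed n, vlift n y t⟫ = -t := by
    simp [inner_vlift, ed, (Fin.castSucc_lt_last _).ne]
  linarith

lemma SKFiber_nonempty [NeZero n] (hK : Bornology.IsBounded K) (hne : K.Nonempty)
    (y : EuclideanSpace ℝ (Fin n)) : (SKFiber K y).Nonempty := by
  obtain ⟨x, hx⟩ := hne
  have hxS : vlift n (vproj n x) (x (Fin.last n)) ∈ SK K := (vlift_vproj x).symm ▸ subset_SK hK hx
  exact ⟨_, vlift_mem_SK_of_le hxS le_rfl⟩

lemma fK_le_of_vlift_mem_SK {y : EuclideanSpace ℝ (Fin n)} {t : ℝ} (h : vlift n y t ∈ SK K) :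
    fK K y ≤ t :=
  csInf_le (bddBelow_SKFiber y) h

lemma vlift_fK_mem_SK [NeZero n] (hK : Bornology.IsBounded K) (hne : K.Nonempty)
    (y : EuclideanSpace ℝ (Fin n)) : vlift n y (fK K y) ∈ SK K :=
  (isClosed_SKFiber y).csInf_mem (SKFiber_nonempty hK hne y) (bddBelow_SKFiber y)

lemma fK_le_fK_add_sum_abs_sub [NeZero n] (hK : Bornology.IsBounded K) (hne : K.Nonempty)
    (y y' : EuclideanSpace ℝ (Fin n)) : fK K y ≤ fK K y' + ∑ j, |y j - y' j| :=
  fK_le_of_vlift_mem_SK (vlift_mem_SK_of_le (vlift_fK_mem_SK hK hne y') le_rfl)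

lemma abs_fK_sub_le [NeZero n] (hK : Bornology.IsBounded K) (hne : K.Nonempty)
    (y y' : EuclideanSpace ℝ (Fin n)) : |fK K y - fK K y'| ≤ ∑ j, |y j - y' j| := by
  have h₁ := fK_le_fK_add_sum_abs_sub hK hne y y'
  have h₂ := fK_le_fK_add_sum_abs_sub hK hne y' y
  simp only [abs_sub_comm (y' _)] at h₂
  exact abs_sub_le_iff.mpr ⟨by linarith, by linarith⟩

lemma convexOn_fK [NeZero n] (hK : Bornology.IsBounded K) (hne : K.Nonempty) :
    ConvexOn ℝ univ (fK K) := by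
  refine ⟨convex_univ, fun y _ y' _ a b ha hb hab => ?_⟩
  have h := convex_SK (vlift_fK_mem_SK hK hne y) (vlift_fK_mem_SK hK hne y') ha hb hab
  rw [vlift_add_smul] at h
  exact fK_le_of_vlift_mem_SK h

end SupportSet

theorem fK_convex_and_l1_lipschitz_general (n : ℕ) (hn : 1 ≤ n)
    (K : Set (EuclideanSpace ℝ (Fin (n + 1))))
    (hKc : IsCompact K) (hKint : (interior K).Nonempty) :
    ConvexOn ℝ Set.univ (fK K) ∧
    ∀ y y' : EuclideanSpace ℝ (Fin n), |fK K y - fK K y'| ≤ ∑ j, |y j - y' j| := by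
  have : NeZero n := ⟨by omega⟩
  have hne : K.Nonempty := hKint.mono interior_subset
  exact ⟨convexOn_fK hKc.isBounded hne, abs_fK_sub_le hKc.isBounded hne⟩

/-- for every convex body `K ⊆ ℝ^d` (`d = n + 1 ≥ 2`), the function `f_K`
is convex and 1-Lipschitz with respect to the ℓ¹-norm. -/
theorem fK_convex_and_l1_lipschitz (n : ℕ) (hn : 1 ≤ n)
    (K : Set (EuclideanSpace ℝ (Fin (n + 1))))
    (hKc : IsCompact K) (hKconv : Convex ℝ K) (hKint : (interior K).Nonempty) :
    ConvexOn ℝ Set.univ (fK K) ∧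
    ∀ y y' : EuclideanSpace ℝ (Fin n), |fK K y - fK K y'| ≤ ∑ j, |y j - y' j| :=
  fK_convex_and_l1_lipschitz_general n hn K hKc hKint
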